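/- arXiv:2010.05827 — 3 statements merged into one kernel-verified Lean document; each statement's English description precedes it below -/
import Mathlib

section
/- Let N ≥ 2 and let p_1, …, p_{N−1} be integers. There exist an integer k and an N×N antisymmetric integer matrix M with nonnegative upper entries such that p_j = k·δ_{j,1} + k·δ_{j,N−1} − Δp_j for all 1 ≤ j ≤ N−1 if and only if N divides ∑_{j=1}^{N−1} j·p_j. -/
/-!
Write `m j` for the row sums and `a t = m 1 + ⋯ + m t` for their partial sums. Antisymmetry gives
`a 0 = a N = 0`, and the conditions say that `p` is `k (δ_{·,1} + δ_{·,N-1})` plus the second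
difference of `a`. Summation by parts gives `∑ j (a_{j+1} - 2 a_j + a_{j-1}) = -N a_{N-1}` whenever
`a 0 = a N = 0`, hence `∑ j p_j = N (k - a_{N-1})`.

Conversely, if `N ∣ ∑ j p_j` the same identity shows that the discrete Dirichlet problem
`Δ²f = p`, `f 0 = f N = 0` has an integer solution. Adding `k` times the indicator of `(0, N)`
with `k ≥ max |f|` makes it nonnegative and changes its second difference exactly by
`-k (δ_{·,1} + δ_{·,N-1})`. The tridiagonal matrix with `a_j` at `(j, j+1)` and `-a_j` at
`(j+1, j)` then has row sums `a_j - a_{j-1}`.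
-/

open Finset

/-- Because `j - 1` truncates, this is the second difference of `f` only for `1 ≤ j`. -/
def secondDiff (f : ℕ → ℤ) (j : ℕ) : ℤ := f (j + 1) - 2 * f j + f (j - 1)

theorem sum_mul_secondDiff (f : ℕ → ℤ) (n : ℕ) :
    ∑ j ∈ Icc 1 n, (j : ℤ) * secondDiff f j = n * f (n + 1) - (n + 1) * f n + f 0 := by
  induction n with
  | zero => simp
  | succ n ih =>
    rw [sum_Icc_succ_top (by omega), ih, secondDiff, Nat.add_sub_cancel]
    push_cast
    ring

theorem secondDiff_partialSum (m : ℕ → ℤ) {j : ℕ} (hj : 1 ≤ j) :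
    secondDiff (fun t => ∑ i ∈ Icc 1 t, m i) j = m (j + 1) - m j := by
  obtain ⟨i, rfl⟩ := Nat.exists_eq_add_of_le' hj
  simp only [secondDiff, Nat.add_sub_cancel, sum_Icc_succ_top (show 1 ≤ i + 1 + 1 by omega),
    sum_Icc_succ_top (show 1 ≤ i + 1 by omega)]
  ring

theorem sum_sum_eq_zero_of_antisymm {ι R : Type*} [NonAssocRing R] [NoZeroDivisors R]
    [CharZero R] {s : Finset ι} {M : ι → ι → R} (h : ∀ j ∈ s, ∀ l ∈ s, M j l = -M l j) :
    ∑ j ∈ s, ∑ l ∈ s, M j l = 0 := by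
  rw [← CharZero.eq_neg_self_iff]
  calc ∑ j ∈ s, ∑ l ∈ s, M j l = ∑ j ∈ s, ∑ l ∈ s, M l j := sum_comm
    _ = ∑ j ∈ s, ∑ l ∈ s, -M j l := sum_congr rfl fun j hj => sum_congr rfl fun l hl => h l hl j hj
    _ = -∑ j ∈ s, ∑ l ∈ s, M j l := by simp only [sum_neg_distrib]

theorem sum_mul_eq_of_eq_secondDiff {N : ℕ} (hN : 2 ≤ N) {p a : ℕ → ℤ} {k : ℤ}
    (ha0 : a 0 = 0) (haN : a N = 0)
    (hp : ∀ j ∈ Icc 1 (N - 1),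
      p j = (if j = 1 then k else 0) + (if j = N - 1 then k else 0) + secondDiff a j) :
    ∑ j ∈ Icc 1 (N - 1), (j : ℤ) * p j = N * (k - a (N - 1)) := by
  rw [sum_congr rfl fun j hj => by rw [hp j hj]]
  simp only [mul_add, mul_ite, mul_zero, sum_add_distrib, sum_ite_eq', sum_mul_secondDiff,
    Nat.sub_add_cancel (show 1 ≤ N by omega), ha0, haN, mem_Icc, le_refl, true_and,
    show 1 ≤ N - 1 by omega, if_true]
  push_cast [show 1 ≤ N by omega]
  ring

def secondAntidiff (p : ℕ → ℤ) : ℕ → ℤ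
  | 0 => 0
  | 1 => 0
  | j + 2 => 2 * secondAntidiff p (j + 1) - secondAntidiff p j + p (j + 1)

theorem secondDiff_secondAntidiff (p : ℕ → ℤ) {j : ℕ} (hj : 1 ≤ j) :
    secondDiff (secondAntidiff p) j = p j := by
  obtain ⟨i, rfl⟩ := Nat.exists_eq_add_of_le' hj
  simp only [secondDiff, secondAntidiff, Nat.add_sub_cancel]
  ring

theorem exists_eq_secondDiff_of_dvd {N : ℕ} (hN : 1 ≤ N) {p : ℕ → ℤ}
    (h : (N : ℤ) ∣ ∑ j ∈ Icc 1 (N - 1), (j : ℤ) * p j) :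
    ∃ f : ℕ → ℤ, f 0 = 0 ∧ f N = 0 ∧ ∀ j, 1 ≤ j → secondDiff f j = p j := by
  set g := secondAntidiff p
  have hsum := sum_mul_secondDiff g (N - 1)
  rw [sum_congr rfl fun j hj => by rw [secondDiff_secondAntidiff p (mem_Icc.1 hj).1],
    Nat.sub_add_cancel hN] at hsum
  push_cast [hN] at hsum
  obtain ⟨c, hc⟩ := h
  obtain ⟨e, he⟩ : (N : ℤ) ∣ g N :=
    ⟨g N - g (N - 1) - c, by rw [show g 0 = 0 from rfl] at hsum; linarith⟩
  refine ⟨fun j => g j - e * j, by simp [g, secondAntidiff], by simp [he, mul_comm],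
    fun j hj => ?_⟩
  rw [← secondDiff_secondAntidiff p hj]
  simp only [secondDiff]
  push_cast [hj]
  ring

theorem exists_nonneg_eq_secondDiff_of_dvd {N : ℕ} (hN : 1 ≤ N) {p : ℕ → ℤ}
    (h : (N : ℤ) ∣ ∑ j ∈ Icc 1 (N - 1), (j : ℤ) * p j) :
    ∃ (k : ℤ) (a : ℕ → ℤ), a 0 = 0 ∧ a N = 0 ∧ (∀ j < N, 0 ≤ a j) ∧
      ∀ j ∈ Icc 1 (N - 1),
        p j = (if j = 1 then k else 0) + (if j = N - 1 then k else 0) + secondDiff a j := by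
  obtain ⟨f, hf0, hfN, hf⟩ := exists_eq_secondDiff_of_dvd hN h
  set k := ∑ j ∈ range N, |f j|
  refine ⟨k, fun j => f j + k * if 0 < j ∧ j < N then 1 else 0, by simp [hf0], by simp [hfN],
    fun j hj => ?_, fun j hj => ?_⟩
  · rcases Nat.eq_zero_or_pos j with rfl | hj0
    · simp [hf0]
    have : |f j| ≤ k := single_le_sum (f := fun i => |f i|) (fun i _ => abs_nonneg _)
      (mem_range.2 hj)
    simp only [hj0, hj, and_self, if_true, mul_one]
    linarith [neg_abs_le (f j)]
  · rw [mem_Icc] at hj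
    rw [← hf j hj.1]
    simp only [secondDiff]
    split_ifs <;> omega

def tridiag (a : ℕ → ℤ) (j l : ℕ) : ℤ :=
  (if l = j + 1 then a j else 0) - (if j = l + 1 then a l else 0)

theorem tridiag_antisymm (a : ℕ → ℤ) (j l : ℕ) : tridiag a j l = -tridiag a l j := by
  unfold tridiag
  split_ifs <;> omega

theorem tridiag_nonneg {a : ℕ → ℤ} {j l : ℕ} (ha : 0 ≤ a j) (hjl : j < l) :
    0 ≤ tridiag a j l := by
  unfold tridiag
  split_ifs <;> omega

theorem sum_tridiag {N : ℕ} {a : ℕ → ℤ} (ha0 : a 0 = 0) (haN : a N = 0) {j : ℕ}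
    (hj : j ∈ Icc 1 N) : ∑ l ∈ Icc 1 N, tridiag a j l = a j - a (j - 1) := by
  rw [mem_Icc] at hj
  unfold tridiag
  rw [sum_sub_distrib, sum_eq_single (j + 1), sum_eq_single (j - 1)]
  · simp [Nat.sub_add_cancel hj.1]
  · intro l _ hl
    simp only [ite_eq_right_iff]
    omega
  · intro hj'
    rw [mem_Icc] at hj'
    obtain rfl : j = 1 := by omega
    simp [ha0]
  · intro l _ hl
    simp [hl]
  · intro hj'
    rw [mem_Icc] at hj'
    obtain rfl : j = N := by omega
    simp [haN]

/-- For `N ≥ 2` and integers `p 1, …, p (N-1)`, there exist an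
integer `k` and an `N × N` antisymmetric integer matrix `M` with nonnegative
upper entries such that `p j = k·δ_{j,1} + k·δ_{j,N-1} - Δp j` for all
`1 ≤ j ≤ N-1` (where `Δp j = m j - m (j+1)` and `m j` is the `j`-th row sum of
`M`) if and only if `N` divides `∑_{j=1}^{N-1} j · p j`. -/
theorem stmt_3 (N : ℕ) (hN : 2 ≤ N) (p : ℕ → ℤ) :
    (∃ (k : ℤ) (M : ℕ → ℕ → ℤ),
      (∀ j ∈ Finset.Icc 1 N, ∀ l ∈ Finset.Icc 1 N, M j l = - M l j) ∧
      (∀ j ∈ Finset.Icc 1 N, ∀ l ∈ Finset.Icc 1 N, j < l → 0 ≤ M j l) ∧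
      (∀ j ∈ Finset.Icc 1 (N - 1),
        p j = (if j = 1 then k else 0) + (if j = N - 1 then k else 0)
          - ((∑ l ∈ Finset.Icc 1 N, M j l) - (∑ l ∈ Finset.Icc 1 N, M (j + 1) l)))) ↔
    (N : ℤ) ∣ ∑ j ∈ Finset.Icc 1 (N - 1), (j : ℤ) * p j := by
  constructor
  · rintro ⟨k, M, hanti, -, hp⟩
    set a : ℕ → ℤ := fun t => ∑ i ∈ Icc 1 t, ∑ l ∈ Icc 1 N, M i l
    have haN : a N = 0 := sum_sum_eq_zero_of_antisymm hanti
    refine ⟨k - a (N - 1), sum_mul_eq_of_eq_secondDiff hN (by simp [a]) haN fun j hj => ?_⟩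
    rw [hp j hj, secondDiff_partialSum _ (mem_Icc.1 hj).1]
    ring
  · intro hdvd
    obtain ⟨k, a, ha0, haN, ha, hp⟩ := exists_nonneg_eq_secondDiff_of_dvd (by omega) hdvd
    refine ⟨k, tridiag a, fun j _ l _ => tridiag_antisymm a j l,
      fun j _ l hl hjl => tridiag_nonneg (ha j (by grind)) hjl, fun j hj => ?_⟩
    have hj' := mem_Icc.1 hj
    rw [sum_tridiag ha0 haN (mem_Icc.2 ⟨hj'.1, by omega⟩),
      sum_tridiag ha0 haN (mem_Icc.2 ⟨by omega, by omega⟩), hp j hj, secondDiff,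
      Nat.add_sub_cancel]
    ring
end

section
/- Let N = 5 and let p_1, p_2, p_3, p_4 be nonnegative integers with p_4 ≤ p_1, p_1 ≤ 3p_2 + 2p_3 + p_4, and 2p_2 ≥ 2p_3 + p_4 − p_1. Then max{k_1, k_2, k_3, k_4} = (3p_1 + 6p_2 + 4p_3 + 2p_4)/5. -/
open Finset

theorem sum_Icc_one_succ_sub_mul {R : Type*} [CommRing R] (q : ℕ → R) (n : ℕ) :
    ∑ j ∈ Icc 1 (n + 1), (((n + 1 : ℕ) : R) - j) * q j
      = ∑ j ∈ Icc 1 n, ((n : R) - j) * q j + ∑ j ∈ Icc 1 n, q j := by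
  rw [sum_Icc_succ_top (by omega), sub_self, zero_mul, add_zero, ← sum_add_distrib]
  refine sum_congr rfl fun j _ => ?_
  push_cast
  ring

theorem stmt_11_general (p1 p2 p3 p4 : ℕ) (h2 : p1 ≤ 3 * p2 + 2 * p3 + p4)
    (h3 : 2 * (p3 : ℤ) + p4 - p1 ≤ 2 * p2) :
    let p : ℕ → ℚ := fun j =>
      if j = 1 then (p1 : ℚ) else if j = 2 then (p2 : ℚ)
        else if j = 3 then (p3 : ℚ) else if j = 4 then (p4 : ℚ) else 0
    let k : ℕ → ℚ := fun n =>
      ((n : ℚ) / 5) * ∑ j ∈ Finset.Icc (1 : ℕ) 4, (j : ℚ) * p j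
        - ∑ j ∈ Finset.Icc (1 : ℕ) n, ((n : ℚ) - j) * p (5 - j)
    max (k 1) (max (k 2) (max (k 3) (k 4)))
      = (3 * (p1 : ℚ) + 6 * p2 + 4 * p3 + 2 * p4) / 5 := by
  intro p k
  set S := ∑ j ∈ Icc (1 : ℕ) 4, (j : ℚ) * p j with hS
  -- `k` is concave: its increments `S/5 - (p 4 + … + p (5 - n))` decrease, so `k 3` is the
  -- maximum as soon as `k 2 ≤ k 3` and `k 4 ≤ k 3`, which are `h3` and `h2`.
  have hinc (n : ℕ) : k (n + 1) = k n + S / 5 - ∑ j ∈ Icc 1 n, p (5 - j) := by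
    simp only [k, sum_Icc_one_succ_sub_mul]
    push_cast
    ring
  have hk1 : k 1 = S / 5 := by simp [k, hS, div_eq_inv_mul]
  have hk2 : k 2 = k 1 + S / 5 - p4 := by simp [hinc 1, p]
  have hk3 : k 3 = k 2 + S / 5 - (p4 + p3) := by
    rw [hinc 2]; simp [sum_Icc_succ_top, p]
  have hk4 : k 4 = k 3 + S / 5 - (p4 + p3 + p2) := by
    rw [hinc 3]; simp [sum_Icc_succ_top, p]
  have hSval : S = p1 + 2 * p2 + 3 * p3 + 4 * p4 := by
    simp [hS, sum_Icc_succ_top, p]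
  have hq2 : (p1 : ℚ) ≤ 3 * p2 + 2 * p3 + p4 := by exact_mod_cast h2
  have hq3 : 2 * (p3 : ℚ) + p4 - p1 ≤ 2 * p2 := by exact_mod_cast h3
  have h23 : k 2 ≤ k 3 := by linarith
  have h12 : k 1 ≤ k 2 := by linarith [(Nat.cast_nonneg p3 : (0 : ℚ) ≤ p3)]
  have h43 : k 4 ≤ k 3 := by linarith
  rw [max_eq_left h43, max_eq_right h23, max_eq_right (h12.trans h23)]
  linarith

/-- For `N = 5` and nonnegative integers `p1, p2, p3, p4` with
`p4 ≤ p1`, `p1 ≤ 3p2 + 2p3 + p4` and `2p2 ≥ 2p3 + p4 - p1`, with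
`k n := (n/5)·∑_{j=1}^{4} j·p j - ∑_{j=1}^{n} (n-j)·p (5-j)`, one has
`max {k 1, k 2, k 3, k 4} = (3p1+6p2+4p3+2p4)/5`. -/
theorem stmt_11 (p1 p2 p3 p4 : ℕ) (h1 : p4 ≤ p1) (h2 : p1 ≤ 3 * p2 + 2 * p3 + p4)
    (h3 : 2 * (p3 : ℤ) + p4 - p1 ≤ 2 * p2) :
    let p : ℕ → ℚ := fun j =>
      if j = 1 then (p1 : ℚ) else if j = 2 then (p2 : ℚ)
        else if j = 3 then (p3 : ℚ) else if j = 4 then (p4 : ℚ) else 0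
    let k : ℕ → ℚ := fun n =>
      ((n : ℚ) / 5) * ∑ j ∈ Finset.Icc (1 : ℕ) 4, (j : ℚ) * p j
        - ∑ j ∈ Finset.Icc (1 : ℕ) n, ((n : ℚ) - j) * p (5 - j)
    max (k 1) (max (k 2) (max (k 3) (k 4)))
      = (3 * (p1 : ℚ) + 6 * p2 + 4 * p3 + 2 * p4) / 5 :=
  stmt_11_general p1 p2 p3 p4 h2 h3
end

section
/- Let N ≥ 2 and let p_1, …, p_{N−1} be nonnegative integers with p_1 ≥ ∑_{i=2}^{N−1} (N−i)·p_i. Then max{k_n : 1 ≤ n ≤ N−1} = (1/N)·∑_{i=1}^{N−1} (N−i)·p_i, and the maximum is attained at n = N−1. -/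
/-!
Write `S = ∑ j p_j`. The increment `k_{n+1} - k_n = S / N - ∑_{j=1}^{n} p_{N-j}` is nonnegative
for `n ≤ N - 2`: the subtracted sum is at most `∑_{i=2}^{N-1} p_i`, and
`N ∑_{i≥2} p_i = ∑_{i≥2} (N - i) p_i + ∑_{i≥2} i p_i ≤ p_1 + ∑_{i≥2} i p_i = S` by the hypothesis.
So `k` increases on `[1, N - 1]`, and `k_{N-1}` is computed by reflecting `j ↦ N - j`.
-/

open Finset

section

variable (N : ℕ) (p : ℕ → ℕ)

def kSeq (n : ℕ) : ℚ :=
  ((n : ℚ) / N) * ∑ j ∈ Icc 1 (N - 1), (j : ℚ) * p j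
    - ∑ j ∈ Icc 1 n, ((n : ℚ) - j) * p (N - j)

lemma sum_Icc_one_reflect {M : Type*} [AddCommMonoid M] (g : ℕ → M) :
    ∑ j ∈ Icc 1 (N - 1), g j = ∑ i ∈ Icc 1 (N - 1), g (N - i) := by
  refine sum_nbij' (N - ·) (N - ·) ?_ ?_ ?_ ?_ ?_ <;> intro a ha <;>
    simp only [mem_Icc] at * <;> first | omega | (congr 1; omega)

lemma kSeq_pred (hN : 1 ≤ N) :
    kSeq N p (N - 1) = (1 / (N : ℚ)) * ∑ i ∈ Icc 1 (N - 1), ((N : ℚ) - i) * p i := by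
  have hN0 : (N : ℚ) ≠ 0 := by positivity
  rw [kSeq, sum_Icc_one_reflect N (fun j => (((N - 1 : ℕ) : ℚ) - j) * p (N - j)),
    mul_sum, mul_sum, ← sum_sub_distrib]
  refine sum_congr rfl fun i hi => ?_
  rw [mem_Icc] at hi
  rw [Nat.sub_sub_self (by omega), Nat.cast_sub (show i ≤ N by omega), Nat.cast_sub hN, Nat.cast_one]
  field_simp
  ring

lemma kSeq_succ_sub_kSeq (n : ℕ) :
    kSeq N p (n + 1) - kSeq N p n
      = (∑ j ∈ Icc 1 (N - 1), (j : ℚ) * p j) / N - ∑ j ∈ Icc 1 n, (p (N - j) : ℚ) := by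
  simp only [kSeq, sum_Icc_succ_top (Nat.le_add_left 1 n), Nat.cast_add, Nat.cast_one, sub_self,
    zero_mul, add_zero]
  have hsplit : ∑ j ∈ Icc 1 n, ((n : ℚ) + 1 - j) * p (N - j)
      = ∑ j ∈ Icc 1 n, ((n : ℚ) - j) * p (N - j) + ∑ j ∈ Icc 1 n, (p (N - j) : ℚ) := by
    rw [← sum_add_distrib]
    exact sum_congr rfl fun j _ => by ring
  rw [hsplit]
  ring

lemma mul_sum_Icc_two_le
    (hp : ∑ i ∈ Icc 2 (N - 1), ((N : ℚ) - i) * p i ≤ p 1) :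
    N * ∑ i ∈ Icc 2 (N - 1), (p i : ℚ) ≤ ∑ j ∈ Icc 1 (N - 1), (j : ℚ) * p j := by
  rcases Nat.lt_or_ge N 2 with hN | hN
  · rw [Icc_eq_empty (by omega), sum_empty, mul_zero]
    exact sum_nonneg fun j _ => by positivity
  rw [← insert_Icc_add_one_left_eq_Icc (show 1 ≤ N - 1 by omega), sum_insert (by simp), mul_sum]
  calc ∑ i ∈ Icc 2 (N - 1), (N : ℚ) * p i
      = ∑ i ∈ Icc 2 (N - 1), ((N : ℚ) - i) * p i + ∑ i ∈ Icc 2 (N - 1), (i : ℚ) * p i := by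
        rw [← sum_add_distrib]
        exact sum_congr rfl fun i _ => by ring
    _ ≤ _ := by
        rw [Nat.cast_one, one_mul]
        exact add_le_add_left hp _

lemma sum_Icc_one_reflect_le_sum_Icc_two {n : ℕ} (hn : n ≤ N - 2) :
    ∑ j ∈ Icc 1 n, (p (N - j) : ℚ) ≤ ∑ i ∈ Icc 2 (N - 1), (p i : ℚ) := by
  rw [← sum_image (f := fun i => (p i : ℚ)) (g := (N - ·)) (fun a ha b hb hab => by
    simp only [coe_Icc, Set.mem_Icc] at ha hb hab; omega)]
  refine sum_le_sum_of_subset_of_nonneg ?_ fun i _ _ => by positivity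
  intro i hi
  simp only [mem_image, mem_Icc] at hi ⊢
  omega

lemma kSeq_monotoneOn
    (hp : ∑ i ∈ Icc 2 (N - 1), ((N : ℚ) - i) * p i ≤ p 1) :
    MonotoneOn (kSeq N p) (Set.Icc 1 (N - 1)) := by
  refine monotoneOn_of_le_add_one Set.ordConnected_Icc fun n _ hn hn1 => ?_
  rw [Set.mem_Icc] at hn hn1
  have hN0 : (0 : ℚ) < N := by norm_cast; omega
  rw [← sub_nonneg, kSeq_succ_sub_kSeq, sub_nonneg, le_div_iff₀ hN0, mul_comm]
  calc N * ∑ j ∈ Icc 1 n, (p (N - j) : ℚ)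
      ≤ N * ∑ i ∈ Icc 2 (N - 1), (p i : ℚ) := by
        gcongr
        exact sum_Icc_one_reflect_le_sum_Icc_two N p (by omega)
    _ ≤ _ := mul_sum_Icc_two_le N p hp

end

/-- For `N ≥ 2` and nonnegative integers `p 1, …, p (N-1)` with
`p 1 ≥ ∑_{i=2}^{N-1} (N-i)·p i`, with
`k n := (n/N)·∑_{j=1}^{N-1} j·p j - ∑_{j=1}^{n} (n-j)·p (N-j)`, one has
`max {k n | 1 ≤ n ≤ N-1} = (1/N)·∑_{i=1}^{N-1} (N-i)·p i`, the maximum being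
attained at `n = N-1`. -/
theorem stmt_13 (N : ℕ) (hN : 2 ≤ N) (p : ℕ → ℕ)
    (hp : ∑ i ∈ Finset.Icc 2 (N - 1), ((N : ℤ) - i) * p i ≤ (p 1 : ℤ)) :
    let k : ℕ → ℚ := fun n =>
      ((n : ℚ) / N) * ∑ j ∈ Finset.Icc 1 (N - 1), (j : ℚ) * p j
        - ∑ j ∈ Finset.Icc 1 n, ((n : ℚ) - j) * p (N - j)
    k (N - 1) = (1 / (N : ℚ)) * ∑ i ∈ Finset.Icc 1 (N - 1), ((N : ℚ) - i) * p i ∧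
      ∀ n ∈ Finset.Icc 1 (N - 1), k n ≤ k (N - 1) := by
  have hpQ : ∑ i ∈ Finset.Icc 2 (N - 1), ((N : ℚ) - i) * p i ≤ p 1 := by exact_mod_cast hp
  refine ⟨kSeq_pred N p (by omega), fun n hn => ?_⟩
  obtain ⟨hn1, hnN⟩ := Finset.mem_Icc.1 hn
  exact kSeq_monotoneOn N p hpQ ⟨hn1, hnN⟩ ⟨by omega, le_rfl⟩ hnN
end
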